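/- Let T be a non-reversible tree. For every condensation f of T that is not an automorphism, let α_f := min{ht(t) : t ∈ T and ht(t) < ht(f(t))}. Then min{α_f : f a condensation of T that is not an automorphism} = max{β < ht(T) : for every condensation f of T, f maps T|β bijectively onto itself and the restriction f↾(T|β) is an automorphism of the tree T|β}. -/

import Mathlib

/-!
A condensation `f` never lowers heights, so `α_f` is the least height at which `f` lifts some
node. Below `α := min α_f` every condensation preserves heights, and a height-preserving
condensation reflects `<` (two predecessors of `f t` of the same height coincide), so each
condensation restricts to an automorphism of `T|α`. Conversely, if `f↾(T|β)` is an automorphism,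
pulling back the predecessors of `f t` along `f` shows `ht (f t) ≤ ht t` for `ht t < β`; applied
to a condensation `g` realising `α` and a node of height `α` lifted by `g`, this gives `β ≤ α`.
-/

universe u v

/- The height of an element `t`: the order type of the set `(·,t)` of its strict
predecessors (which is well-ordered when the order is a tree). -/
open Classical in
noncomputable def treeHt {T : Type u} [PartialOrder T] (t : T) : Ordinal.{u} :=
  if h : IsWellOrder {s : T // s < t} (fun a b => (a : T) < (b : T)) then
    @Ordinal.type {s : T // s < t} (fun a b => (a : T) < (b : T)) h
  else 0

def IsTree (T : Type u) [PartialOrder T] : Prop :=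
  ∀ t : T, IsWellOrder {s : T // s < t} (fun a b => (a : T) < (b : T))

def IsCond {T : Type u} [PartialOrder T] (f : T → T) : Prop :=
  Function.Bijective f ∧ ∀ s t : T, s < t → f s < f t

def IsAuto {T : Type u} [PartialOrder T] (f : T → T) : Prop :=
  Function.Bijective f ∧ ∀ s t : T, s < t ↔ f s < f t

def Reversible (T : Type u) [PartialOrder T] : Prop :=
  ∀ f : T → T, IsCond f → IsAuto f

def level (T : Type u) [PartialOrder T] (α : Ordinal.{u}) : Set T :=
  {t : T | treeHt t = α}

noncomputable def treeHeight (T : Type u) [PartialOrder T] : Ordinal.{u} :=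
  sInf {α : Ordinal.{u} | level T α = ∅}

/-- Nodes: equivalence classes of the relation `s ∼ t` iff `(·,s) = (·,t)`. -/
def IsNode {T : Type u} [PartialOrder T] (N : Set T) : Prop :=
  ∃ t : T, N = {s : T | Set.Iio s = Set.Iio t}

/-- `S↑`, the upward closure of `S`. -/
def upClo {T : Type u} [PartialOrder T] (S : Set T) : Set T :=
  {t : T | ∃ s ∈ S, s ≤ t}

def IsBranch {T : Type u} [PartialOrder T] (b : Set T) : Prop :=
  IsMaxChain (· ≤ ·) b

/- The height (order type) of a chain (junk value `0` if not well-ordered;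
in a tree every chain is well-ordered). -/
open Classical in
noncomputable def chainHt {T : Type u} [PartialOrder T] (b : Set T) : Ordinal.{u} :=
  if h : IsWellOrder b (fun x y : b => (x : T) < (y : T)) then
    @Ordinal.type b (fun x y : b => (x : T) < (y : T)) h
  else 0

/-- `f` maps `T|β` bijectively onto itself and the restriction `f↾(T|β)` is an
automorphism of the tree `T|β` (the set of elements of height `< β` with the
induced order). -/
def RestrAuto {T : Type u} [PartialOrder T] (f : T → T) (β : Ordinal.{u}) : Prop :=
  Set.BijOn f {t : T | treeHt t < β} {t : T | treeHt t < β} ∧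
  ∀ s t : T, treeHt s < β → treeHt t < β → (s < t ↔ f s < f t)

section Tree

variable {T : Type u} [PartialOrder T]

theorem treeHt_eq_type (hT : IsTree T) (t : T) :
    treeHt t = @Ordinal.type {s : T // s < t} (fun a b => (a : T) < (b : T)) (hT t) :=
  dif_pos (hT t)

theorem treeHt_eq_typein (hT : IsTree T) {s t : T} (h : s < t) :
    treeHt s =
      (@Ordinal.typein {v : T // v < t} (fun a b => (a : T) < (b : T)) (hT t)) ⟨s, h⟩ := by
  have := hT t
  have := hT s
  rw [treeHt_eq_type hT, ← Ordinal.type_subrel]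
  exact RelIso.ordinalType_congr
    ⟨⟨fun u => ⟨⟨u.1, u.2.trans h⟩, u.2⟩, fun b => ⟨b.1.1, b.2⟩, fun _ => rfl, fun _ => rfl⟩,
      Iff.rfl⟩

theorem treeHt_lt_treeHt (hT : IsTree T) {s t : T} (h : s < t) : treeHt s < treeHt t := by
  have := hT t
  rw [treeHt_eq_typein hT h, treeHt_eq_type hT t]
  exact Ordinal.typein_lt_type _ _

theorem exists_lt_treeHt_eq (hT : IsTree T) {t : T} {β : Ordinal.{u}} (hβ : β < treeHt t) :
    ∃ s < t, treeHt s = β := by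
  have := hT t
  rw [treeHt_eq_type hT] at hβ
  obtain ⟨s, hs⟩ := Ordinal.typein_surj _ hβ
  exact ⟨s.1, s.2, (treeHt_eq_typein hT s.2).trans hs⟩

theorem eq_of_lt_of_lt_of_treeHt_eq (hT : IsTree T) {a b t : T} (ha : a < t) (hb : b < t)
    (hab : treeHt a = treeHt b) : a = b := by
  have := hT t
  rcases trichotomous_of (fun x y : {s : T // s < t} => (x : T) < (y : T)) ⟨a, ha⟩ ⟨b, hb⟩ with
    h | h | h
  · exact absurd hab (treeHt_lt_treeHt hT h).ne
  · exact congrArg Subtype.val h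
  · exact absurd hab (treeHt_lt_treeHt hT h).ne'

theorem treeHt_lt_treeHeight (hT : IsTree T) (t : T) : treeHt t < treeHeight T := by
  have hne : {α : Ordinal.{u} | level T α = ∅}.Nonempty :=
    ⟨⨆ t : T, treeHt t + 1, Set.eq_empty_of_forall_notMem fun s hs =>
      (Ordinal.lt_iSup_add_one (fun t : T => treeHt t) s).ne hs⟩
  have hempty : level T (treeHeight T) = ∅ := csInf_mem hne
  by_contra! h
  rcases h.eq_or_lt with h | h
  · exact Set.eq_empty_iff_forall_notMem.1 hempty t h.symm
  · obtain ⟨s, -, hs⟩ := exists_lt_treeHt_eq hT h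
    exact Set.eq_empty_iff_forall_notMem.1 hempty s hs

theorem IsAuto.treeHt_apply (hT : IsTree T) {f : T → T} (hf : IsAuto f) (t : T) :
    treeHt (f t) = treeHt t := by
  have := hT t; have := hT (f t)
  rw [treeHt_eq_type hT t, treeHt_eq_type hT (f t)]
  exact (RelIso.ordinalType_congr
    { toEquiv := Equiv.subtypeEquiv (Equiv.ofBijective f hf.1) fun a => hf.2 a t,
      map_rel_iff' := fun {a b} => (hf.2 a.1 b.1).symm }).symm

namespace IsCond

variable {f : T → T}

theorem treeHt_le_apply (hT : IsTree T) (hf : IsCond f) (t : T) : treeHt t ≤ treeHt (f t) := by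
  have := hT t; have := hT (f t)
  rw [treeHt_eq_type hT t, treeHt_eq_type hT (f t)]
  exact RelEmbedding.ordinal_type_le
    (RelEmbedding.ofMonotone (fun s => ⟨f s.1, hf.2 _ _ s.2⟩) fun _ _ h => hf.2 _ _ h)

theorem lt_of_apply_lt (hT : IsTree T) (hf : IsCond f) {s t : T}
    (hpres : ∀ u, treeHt u ≤ treeHt t → treeHt (f u) = treeHt u) (h : f s < f t) : s < t := by
  have hst : treeHt s < treeHt t :=
    calc treeHt s ≤ treeHt (f s) := hf.treeHt_le_apply hT s
      _ < treeHt (f t) := treeHt_lt_treeHt hT h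
      _ = treeHt t := hpres t le_rfl
  obtain ⟨u, hut, hu⟩ := exists_lt_treeHt_eq hT hst
  have hfu : f u = f s := eq_of_lt_of_lt_of_treeHt_eq hT (hf.2 _ _ hut) h <| by
    rw [hpres u (hu ▸ hst.le), hpres s hst.le, hu]
  exact hf.1.1 hfu ▸ hut

theorem nonempty_treeHt_lt_apply (hT : IsTree T) (hf : IsCond f) (hnf : ¬IsAuto f) :
    {t | treeHt t < treeHt (f t)}.Nonempty := by
  by_contra h
  have hpres (u : T) : treeHt (f u) = treeHt u :=
    (not_lt.1 fun hu => h ⟨u, hu⟩).antisymm (hf.treeHt_le_apply hT u)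
  exact hnf ⟨hf.1, fun _ _ => ⟨hf.2 _ _, hf.lt_of_apply_lt hT fun u _ => hpres u⟩⟩

theorem restrAuto_of_treeHt_apply (hT : IsTree T) (hf : IsCond f) {β : Ordinal.{u}}
    (hpres : ∀ t, treeHt t < β → treeHt (f t) = treeHt t) : RestrAuto f β := by
  refine ⟨⟨fun t ht => ?_, hf.1.1.injOn, fun s hs => ?_⟩, fun s t _ ht => ⟨hf.2 s t, ?_⟩⟩
  · exact (hpres t ht).trans_lt ht
  · obtain ⟨t, rfl⟩ := hf.1.2 s
    exact ⟨t, (hf.treeHt_le_apply hT t).trans_lt hs, rfl⟩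
  · exact hf.lt_of_apply_lt hT fun u hu => hpres u (hu.trans_lt ht)

end IsCond

theorem RestrAuto.treeHt_apply (hT : IsTree T) {f : T → T} (hf : IsCond f) {β : Ordinal.{u}}
    (hra : RestrAuto f β) {t : T} (ht : treeHt t < β) : treeHt (f t) = treeHt t := by
  refine le_antisymm ?_ (hf.treeHt_le_apply hT t)
  have hft : treeHt (f t) < β := hra.1.1 ht
  have hpre (v : {v : T // v < f t}) : ∃ u, treeHt u < β ∧ f u = v.1 :=
    hra.1.2.2 ((treeHt_lt_treeHt hT v.2).trans hft)
  choose g hgβ hfg using hpre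
  have hgt (v) : g v < t := (hra.2 _ _ (hgβ v) ht).2 (by rw [hfg v]; exact v.2)
  have := hT t; have := hT (f t)
  rw [treeHt_eq_type hT t, treeHt_eq_type hT (f t)]
  refine RelEmbedding.ordinal_type_le (RelEmbedding.ofMonotone (fun v => ⟨g v, hgt v⟩) ?_)
  intro a b hab
  exact (hra.2 _ _ (hgβ a) (hgβ b)).2 (by rw [hfg a, hfg b]; exact hab)

end Tree

/-- Let `T` be a non-reversible tree. For every condensation `f` of `T`
that is not an automorphism let `α_f := min{ht(t) : t ∈ T ∧ ht(t) < ht(f(t))}`. Then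
`min{α_f : f a condensation of T that is not an automorphism}` is the maximum of the
set of `β < ht(T)` such that for every condensation `f` of `T`, `f` maps `T|β`
bijectively onto itself and `f↾(T|β)` is an automorphism of `T|β`. -/
theorem stmt1 {T : Type u} [PartialOrder T] (hT : IsTree T) (hnr : ¬ Reversible T) :
    IsGreatest
      {β : Ordinal.{u} | β < treeHeight T ∧ ∀ f : T → T, IsCond f → RestrAuto f β}
      (sInf {α : Ordinal.{u} | ∃ f : T → T, IsCond f ∧ ¬ IsAuto f ∧
        α = sInf (treeHt '' {t : T | treeHt t < treeHt (f t)})}) := by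
  set B := {α : Ordinal.{u} | ∃ f : T → T, IsCond f ∧ ¬ IsAuto f ∧
    α = sInf (treeHt '' {t : T | treeHt t < treeHt (f t)})}
  obtain ⟨f₀, hf₀, hf₀a⟩ : ∃ f : T → T, IsCond f ∧ ¬IsAuto f := by
    simpa [Reversible] using hnr
  obtain ⟨g, hg, hga, hgB⟩ := csInf_mem (⟨_, f₀, hf₀, hf₀a, rfl⟩ : B.Nonempty)
  obtain ⟨t₀, ht₀, ht₀B⟩ : sInf B ∈ treeHt '' {t : T | treeHt t < treeHt (g t)} :=
    hgB ▸ csInf_mem ((hg.nonempty_treeHt_lt_apply hT hga).image treeHt)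
  have hpres (f : T → T) (hf : IsCond f) (t : T) (ht : treeHt t < sInf B) :
      treeHt (f t) = treeHt t := by
    refine le_antisymm ?_ (hf.treeHt_le_apply hT t)
    by_contra! hlt
    have hfa : ¬IsAuto f := fun ha => hlt.ne' (ha.treeHt_apply hT t)
    have hαf : sInf (treeHt '' {t | treeHt t < treeHt (f t)}) ∈ B := ⟨f, hf, hfa, rfl⟩
    exact ht.not_ge <| (csInf_le' hαf).trans (csInf_le' (Set.mem_image_of_mem treeHt hlt))
  refine ⟨⟨ht₀B ▸ treeHt_lt_treeHeight hT t₀,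
    fun f hf => hf.restrAuto_of_treeHt_apply hT (hpres f hf)⟩, fun β ⟨_, hβ⟩ => ?_⟩
  by_contra! hβB
  exact ht₀.ne' ((hβ g hg).treeHt_apply hT hg (ht₀B ▸ hβB))
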